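/- With Σ_{k,ℓ} as in the recursive definition (parameters 0 < u < 1, σ > u - 1/2): if k = 2m > ℓ = 2n or k = 2m+1 > ℓ = 2n+1, then Σ_{k,ℓ} ≤ (1 - (1-u)/m) Σ_{k-2,ℓ}. -/

import Mathlib

/-- Even–even part: `SigEE u σ m n` is `Σ_{2m,2n}` of the recursive definition. -/
noncomputable def SigEE (u σ : ℝ) : ℕ → ℕ → ℝ
  | m, 0 => ∏ i ∈ Finset.Icc 1 m, (1 - (1 - u) / (i : ℝ))
  | m, n + 1 =>
      (SigEE u σ (m - 1) n
        - u * ∑ j ∈ (Finset.range (n + 1)).attach,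
            ((n.factorial : ℝ) * Real.Gamma ((j : ℕ) + 1/2 + σ) /
              ((j : ℕ).factorial * Real.Gamma ((n : ℝ) + 3/2 + σ))) * SigEE u σ (m - 1) (j : ℕ))
      + u * ∑ j ∈ (Finset.range (n + 1)).attach,
            ((n.factorial : ℝ) * Real.Gamma ((j : ℕ) + 1/2 + σ) /
              ((j : ℕ).factorial * Real.Gamma (((n : ℝ) + 1) + 1/2 + σ))) * SigEE u σ m (j : ℕ)
  termination_by m n => n
  decreasing_by
  · omega
  · exact Finset.mem_range.mp j.2
  · exact Finset.mem_range.mp j.2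

/-- Odd–odd part: `SigOO u σ m n` is `Σ_{2m+1,2n+1}` of the recursive definition. -/
noncomputable def SigOO (u σ : ℝ) (m n : ℕ) : ℝ :=
  SigEE u σ m n - u * ∑ j ∈ Finset.range (n + 1),
    ((n.factorial : ℝ) * Real.Gamma ((j : ℝ) + 1/2 + σ) /
      ((j.factorial : ℝ) * Real.Gamma ((n : ℝ) + 3/2 + σ))) * SigEE u σ m j

/-!
With `c_m = 1 - (1-u)/m`, the claim is that the gaps `c_{m+1} Σ_{2m,2n} - Σ_{2m+2,2n}` and their
odd analogues are nonnegative. By the recursion, the increment in `n` of an even gap is an odd gap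
of the backward difference `Σ_{2m,·} - Σ_{2m+2,·}`, and this difference obeys the same recursion,
only with the base ratio `(m+u)/(m+1)` of the row `n = 0` replaced by `(m+u)/(m+2)`. So, by strong
induction on `n` and simultaneously for all such tables, even gaps are nondecreasing in `n` and
odd gaps are nonnegative. The second follows from the first: the odd part
`f n - u ∑_{j ≤ n} b_{n,j} f j` of a nondecreasing `f` with `f n ≥ 0` is nonnegative, because the
weights `b_{n,j}` are positive and, by the hockey-stick identity for `Γ(j+a)/j!`,
`u ∑_j b_{n,j} = u / (1/2 + σ) ≤ 1`.
-/

open Finset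

theorem sum_range_Gamma_add_div_factorial {a : ℝ} (ha : 0 < a) (n : ℕ) :
    ∑ j ∈ range (n + 1), Real.Gamma (j + a) / j.factorial
      = Real.Gamma (n + 1 + a) / (a * n.factorial) := by
  induction n with
  | zero =>
    rw [sum_range_one, Nat.cast_zero, zero_add, zero_add, add_comm, Real.Gamma_add_one ha.ne']
    field_simp
  | succ n ih =>
    have hpos : 0 < (n : ℝ) + 1 + a := by positivity
    rw [sum_range_succ, ih, Nat.factorial_succ, Nat.cast_succ,
      show (n : ℝ) + 1 + 1 + a = n + 1 + a + 1 by ring, Real.Gamma_add_one hpos.ne']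
    push_cast
    field_simp

noncomputable def sigmaWeight (σ : ℝ) (n j : ℕ) : ℝ :=
  (n.factorial : ℝ) * Real.Gamma ((j : ℝ) + 1/2 + σ) /
    ((j.factorial : ℝ) * Real.Gamma ((n : ℝ) + 3/2 + σ))

theorem sigmaWeight_pos {σ : ℝ} (hσ : -(1/2) < σ) (n j : ℕ) : 0 < sigmaWeight σ n j := by
  have hj : 0 < Real.Gamma ((j : ℝ) + 1/2 + σ) :=
    Real.Gamma_pos_of_pos (by linarith [(Nat.cast_nonneg j : (0 : ℝ) ≤ j)])
  have hn : 0 < Real.Gamma ((n : ℝ) + 3/2 + σ) :=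
    Real.Gamma_pos_of_pos (by linarith [(Nat.cast_nonneg n : (0 : ℝ) ≤ n)])
  unfold sigmaWeight
  positivity

theorem sum_sigmaWeight {σ : ℝ} (hσ : -(1/2) < σ) (n : ℕ) :
    ∑ j ∈ range (n + 1), sigmaWeight σ n j = (1/2 + σ)⁻¹ := by
  have ha : 0 < 1/2 + σ := by linarith
  have hG : 0 < Real.Gamma ((n : ℝ) + 3/2 + σ) :=
    Real.Gamma_pos_of_pos (by linarith [(Nat.cast_nonneg n : (0 : ℝ) ≤ n)])
  have hsplit : ∀ j, sigmaWeight σ n j = n.factorial / Real.Gamma ((n : ℝ) + 3/2 + σ)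
      * (Real.Gamma (j + (1/2 + σ)) / j.factorial) := fun j => by
    rw [sigmaWeight, ← add_assoc]
    field_simp
  simp_rw [hsplit, ← mul_sum, sum_range_Gamma_add_div_factorial ha,
    show (n : ℝ) + 1 + (1/2 + σ) = n + 3/2 + σ by ring]
  generalize Real.Gamma ((n : ℝ) + 3/2 + σ) = G at hG ⊢
  field_simp

theorem sub_mul_sum_mul_nonneg {f b : ℕ → ℝ} {c : ℝ} {n : ℕ} (hc : 0 ≤ c) (hb : ∀ j, 0 ≤ b j)
    (hcb : c * ∑ j ∈ range (n + 1), b j ≤ 1) (hf : MonotoneOn f (Set.Iic n)) (hfn : 0 ≤ f n) :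
    0 ≤ f n - c * ∑ j ∈ range (n + 1), b j * f j := by
  have hsum : ∑ j ∈ range (n + 1), b j * f j ≤ (∑ j ∈ range (n + 1), b j) * f n := by
    rw [sum_mul]
    refine sum_le_sum fun j hj => mul_le_mul_of_nonneg_left ?_ (hb j)
    exact hf (Set.mem_Iic.2 (Nat.lt_succ_iff.1 (mem_range.1 hj))) (Set.mem_Iic.2 le_rfl)
      (Nat.lt_succ_iff.1 (mem_range.1 hj))
  nlinarith [mul_le_mul_of_nonneg_left hsum hc]

variable (u σ : ℝ)

/-- The odd row attached to an even table `E`, as `Σ_{2m+1,2n+1}` is attached to `Σ_{2m,2n}`. -/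
noncomputable def oddPart (E : ℕ → ℕ → ℝ) (m n : ℕ) : ℝ :=
  E m n - u * ∑ j ∈ range (n + 1), sigmaWeight σ n j * E m j

def diffFst (E : ℕ → ℕ → ℝ) (m n : ℕ) : ℝ := E m n - E (m + 1) n

noncomputable def gap (k : ℕ) (E : ℕ → ℕ → ℝ) (m n : ℕ) : ℝ :=
  (1 - (1 - u) / ((m : ℝ) + k + 1)) * E m n - E (m + 1) n

/-- Tables obeying the recursion of `Σ_{2m,2n}`, with base row ratio `(m+u)/(m+k+1)`: `Σ` itself
is the case `k = 0`, and the `k`-th backward difference of `Σ` in `m` is the case `k`. -/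
structure IsSigmaFamily (k : ℕ) (E : ℕ → ℕ → ℝ) : Prop where
  succ_succ : ∀ m n, E (m + 1) (n + 1) = oddPart u σ E m n + E (m + 1) n - oddPart u σ E (m + 1) n
  succ_zero : ∀ m, E (m + 1) 0 = ((m : ℝ) + u) / ((m : ℝ) + k + 1) * E m 0
  zero_nonneg : ∀ m, 0 ≤ E m 0

variable {u σ}

theorem oddPart_diffFst (E : ℕ → ℕ → ℝ) :
    oddPart u σ (diffFst E) = diffFst (oddPart u σ E) := by
  ext m n
  simp only [oddPart, diffFst, mul_sub, sum_sub_distrib]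
  ring

theorem oddPart_gap (k : ℕ) (E : ℕ → ℕ → ℝ) :
    oddPart u σ (gap u k E) = gap u k (oddPart u σ E) := by
  ext m n
  simp only [oddPart, gap, mul_sub, sum_sub_distrib, mul_sum]
  ring_nf

namespace IsSigmaFamily

variable {k : ℕ} {E : ℕ → ℕ → ℝ} {m n : ℕ}

theorem diffFst (hE : IsSigmaFamily u σ k E) (hu : u ≤ 1) :
    IsSigmaFamily u σ (k + 1) (diffFst E) where
  succ_succ m n := by
    simp only [oddPart_diffFst, _root_.diffFst, hE.succ_succ]
    ring
  succ_zero m := by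
    simp only [_root_.diffFst, hE.succ_zero (m + 1)]
    rw [hE.succ_zero m]
    push_cast
    field_simp
    ring
  zero_nonneg m := by
    have hk : (0 : ℝ) < m + k + 1 := by positivity
    have hratio : ((m : ℝ) + u) / (m + k + 1) ≤ 1 := by
      rw [div_le_one hk]; linarith [(Nat.cast_nonneg k : (0 : ℝ) ≤ k)]
    simp only [_root_.diffFst, hE.succ_zero m]
    nlinarith [hE.zero_nonneg m]

theorem gap_zero_nonneg (hE : IsSigmaFamily u σ k E) : 0 ≤ gap u k E m 0 := by
  have hk : (0 : ℝ) < m + k + 1 := by positivity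
  have hgap : gap u k E m 0 = k / ((m : ℝ) + k + 1) * E m 0 := by
    rw [gap, hE.succ_zero]
    field_simp
    ring
  rw [hgap]
  exact mul_nonneg (by positivity) (hE.zero_nonneg m)

theorem gap_succ (hE : IsSigmaFamily u σ k E) :
    gap u k E (m + 1) (n + 1)
      = gap u k E (m + 1) n + gap u (k + 1) (oddPart u σ (_root_.diffFst E)) m n := by
  simp only [gap, oddPart_diffFst, _root_.diffFst, hE.succ_succ]
  push_cast
  ring_nf

theorem gap_nonneg_of_monotoneOn (hE : IsSigmaFamily u σ k E)
    (hmono : MonotoneOn (gap u k E m) (Set.Iic n)) : 0 ≤ gap u k E m n :=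
  hE.gap_zero_nonneg.trans (hmono (Set.mem_Iic.2 n.zero_le) (Set.mem_Iic.2 le_rfl) n.zero_le)

theorem gap_oddPart_nonneg_of_monotoneOn (hu0 : 0 ≤ u) (hσ : u - 1/2 < σ)
    (hE : IsSigmaFamily u σ k E) (hmono : MonotoneOn (gap u k E m) (Set.Iic n)) :
    0 ≤ gap u k (oddPart u σ E) m n := by
  have hσ' : -(1/2) < σ := by linarith
  rw [← oddPart_gap]
  refine sub_mul_sum_mul_nonneg hu0 (fun j => (sigmaWeight_pos hσ' n j).le) ?_ hmono
    (hE.gap_nonneg_of_monotoneOn hmono)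
  rw [sum_sigmaWeight hσ', ← div_eq_mul_inv, div_le_one (by linarith)]
  linarith

theorem gap_monotoneOn (hu0 : 0 ≤ u) (hu1 : u ≤ 1) (hσ : u - 1/2 < σ)
    (hE : IsSigmaFamily u σ k E) (hnm : n ≤ m) : MonotoneOn (gap u k E m) (Set.Iic n) := by
  induction n using Nat.strong_induction_on generalizing k E m with
  | _ n ih =>
  refine monotoneOn_of_le_succ Set.ordConnected_Iic fun j _ _ hj => ?_
  rw [Set.mem_Iic, Order.succ_eq_add_one] at hj
  rw [Order.succ_eq_add_one]
  obtain ⟨m, rfl⟩ : ∃ m', m = m' + 1 := ⟨m - 1, by omega⟩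
  have hodd := (hE.diffFst hu1).gap_oddPart_nonneg_of_monotoneOn hu0 hσ
    (ih j (by omega) (hE.diffFst hu1) (by omega : j ≤ m))
  rw [hE.gap_succ]
  linarith

end IsSigmaFamily

theorem oddPart_sigEE : oddPart u σ (SigEE u σ) = SigOO u σ := rfl

theorem sigEE_succ_succ (m n : ℕ) :
    SigEE u σ (m + 1) (n + 1) = SigOO u σ m n + SigEE u σ (m + 1) n - SigOO u σ (m + 1) n := by
  rw [SigEE, Nat.add_sub_cancel, show ((n : ℝ) + 1) + 1/2 + σ = n + 3/2 + σ by ring, sum_attach (range (n + 1)) (fun j => (n.factorial : ℝ) * Real.Gamma ((j : ℝ) + 1/2 + σ) /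
      ((j.factorial : ℝ) * Real.Gamma ((n : ℝ) + 3/2 + σ)) * SigEE u σ m j),
    sum_attach (range (n + 1)) (fun j => (n.factorial : ℝ) * Real.Gamma ((j : ℝ) + 1/2 + σ) /
      ((j.factorial : ℝ) * Real.Gamma ((n : ℝ) + 3/2 + σ)) * SigEE u σ (m + 1) j), SigOO, SigOO]
  ring

theorem isSigmaFamily_sigEE (hu0 : 0 ≤ u) : IsSigmaFamily u σ 0 (SigEE u σ) where
  succ_succ m n := by rw [sigEE_succ_succ, oddPart_sigEE]
  succ_zero m := by
    rw [SigEE, SigEE, prod_Icc_succ_top (by omega), mul_comm]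
    push_cast
    field_simp
    ring
  zero_nonneg m := by
    rw [SigEE]
    refine prod_nonneg fun i hi => ?_
    have hi : (1 : ℝ) ≤ i := by exact_mod_cast (mem_Icc.1 hi).1
    rw [sub_nonneg, div_le_one (by linarith)]
    linarith

theorem sigma_monotone_first_index (u σ : ℝ) (hu0 : 0 < u) (hu1 : u < 1)
    (hσ : u - 1/2 < σ) :
    ∀ m n : ℕ, n < m →
      SigEE u σ m n ≤ (1 - (1 - u) / (m : ℝ)) * SigEE u σ (m - 1) n ∧
      SigOO u σ m n ≤ (1 - (1 - u) / (m : ℝ)) * SigOO u σ (m - 1) n := by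
  intro m n hnm
  obtain ⟨m, rfl⟩ : ∃ m', m = m' + 1 := ⟨m - 1, by omega⟩
  have hE := isSigmaFamily_sigEE (σ := σ) hu0.le
  have hmono := hE.gap_monotoneOn hu0.le hu1.le hσ (Nat.lt_succ_iff.1 hnm)
  have hEven := hE.gap_nonneg_of_monotoneOn hmono
  have hOdd := hE.gap_oddPart_nonneg_of_monotoneOn hu0.le hσ hmono
  rw [oddPart_sigEE] at hOdd
  simp only [gap, CharP.cast_eq_zero, add_zero] at hEven hOdd
  push_cast
  constructor <;> linarith
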